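/- arXiv:2405.13677 — 2 statements merged into one kernel-verified Lean document; each statement's English description precedes it below -/
import Mathlib

section
/- Let σ > 0 and Δ > 0, and let λ, λ' ∈ ℝⁿ with σ ≤ λᵢ and σ ≤ λ'ᵢ for all i, and Σᵢ |λ'ᵢ − λᵢ| ≤ √n·Δ. Then Σᵢ |log λ'ᵢ − log λᵢ| ≤ n · log(1 + Δ/(σ√n)). -/
open Finset

lemma log_diff_le' (σ : ℝ) (hσ : 0 < σ) {a b : ℝ} (ha : σ ≤ a) (hb : σ ≤ b) (hab : b ≤ a) :
    Real.log a - Real.log b ≤ Real.log (1 + (a - b)/σ) := by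
  have hb0 : 0 < b := lt_of_lt_of_le hσ hb
  have ha0 : 0 < a := lt_of_lt_of_le hσ ha
  rw [← Real.log_div (ne_of_gt ha0) (ne_of_gt hb0)]
  apply Real.log_le_log (by positivity)
  rw [div_le_iff₀ hb0]
  have h2 : (1 + (a-b)/σ) * b = (σ*b + (a-b)*b)/σ := by field_simp
  rw [h2, le_div_iff₀ hσ]
  nlinarith [mul_nonneg (sub_nonneg.2 hab) (sub_nonneg.2 hb)]

lemma abs_log_sub_le (σ : ℝ) (hσ : 0 < σ) {a b : ℝ} (ha : σ ≤ a) (hb : σ ≤ b) :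
    |Real.log a - Real.log b| ≤ Real.log (1 + |a - b|/σ) := by
  rcases le_total b a with h | h
  · rw [abs_of_nonneg (sub_nonneg.2 (Real.log_le_log (lt_of_lt_of_le hσ hb) h)),
      abs_of_nonneg (sub_nonneg.2 h)]
    exact log_diff_le' σ hσ ha hb h
  · rw [abs_sub_comm, abs_sub_comm a b]
    rw [abs_of_nonneg (sub_nonneg.2 (Real.log_le_log (lt_of_lt_of_le hσ ha) h)),
      abs_of_nonneg (sub_nonneg.2 h)]
    exact log_diff_le' σ hσ hb ha h

/-- Sensitivity bound for eigenvalue log-scores: if all eigenvalues are at least `σ`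
and the perturbation has `L¹` mass at most `√n·Δ`, then the total change of the
log-scores is at most `n · log (1 + Δ/(σ√n))`. -/
theorem log_score_sensitivity (n : ℕ) (σ Δ : ℝ) (hσ : 0 < σ) (hΔ : 0 < Δ)
    (lam lam' : Fin n → ℝ) (hlam : ∀ i, σ ≤ lam i) (hlam' : ∀ i, σ ≤ lam' i)
    (hpert : ∑ i, |lam' i - lam i| ≤ Real.sqrt n * Δ) :
    ∑ i, |Real.log (lam' i) - Real.log (lam i)|
      ≤ n * Real.log (1 + Δ / (σ * Real.sqrt n)) := by
  rcases Nat.eq_zero_or_pos n with h0 | hn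
  · subst h0; simp
  have hn0 : (0:ℝ) < n := by exact_mod_cast hn
  have hsq : (0:ℝ) < Real.sqrt n := Real.sqrt_pos.2 hn0
  set d : Fin n → ℝ := fun i => |lam' i - lam i| with hd
  have hd0 : ∀ i, 0 ≤ d i := fun i => abs_nonneg _
  set D : ℝ := ∑ i, d i with hD
  have hD0 : 0 ≤ D := Finset.sum_nonneg fun i _ => hd0 i
  -- step 1: pointwise
  have step1 : ∑ i, |Real.log (lam' i) - Real.log (lam i)| ≤ ∑ i, Real.log (1 + d i / σ) :=
    Finset.sum_le_sum fun i _ => abs_log_sub_le σ hσ (hlam' i) (hlam i)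
  -- step 2: Jensen
  have hconc := strictConcaveOn_log_Ioi.concaveOn
  have jensen := hconc.le_map_sum (t := Finset.univ) (w := fun _ : Fin n => (1:ℝ)/n)
    (p := fun i => 1 + d i / σ)
    (fun i _ => by positivity)
    (by simp [Finset.sum_const]; field_simp)
    (fun i _ => by
      have : 0 < 1 + d i / σ := by positivity
      simpa using this)
  have hsum : ∑ i, (1/(n:ℝ)) • (1 + d i / σ) = 1 + D / (n * σ) := by
    simp only [smul_eq_mul, ← Finset.mul_sum, Finset.sum_add_distrib, Finset.sum_const,
      Finset.card_univ, Fintype.card_fin, nsmul_eq_mul, mul_one, ← Finset.sum_div, ← hD]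
    field_simp
  rw [hsum] at jensen
  have jl : (1/(n:ℝ)) * ∑ i, Real.log (1 + d i / σ) ≤ Real.log (1 + D / (n * σ)) := by
    rw [Finset.mul_sum]; simpa using jensen
  have step2 : ∑ i, Real.log (1 + d i / σ) ≤ n * Real.log (1 + D / (n * σ)) := by
    have h := mul_le_mul_of_nonneg_left jl (le_of_lt hn0)
    calc ∑ i, Real.log (1 + d i / σ)
        = n * ((1/(n:ℝ)) * ∑ i, Real.log (1 + d i / σ)) := by field_simp
      _ ≤ n * Real.log (1 + D / (n * σ)) := h
  -- step 3: monotonicity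
  have step3 : Real.log (1 + D / (n * σ)) ≤ Real.log (1 + Δ / (σ * Real.sqrt n)) := by
    apply Real.log_le_log (by positivity)
    have : D / (n * σ) ≤ Δ / (σ * Real.sqrt n) := by
      rw [div_le_div_iff₀ (by positivity) (by positivity)]
      have hss : Real.sqrt n * Real.sqrt n = n := Real.mul_self_sqrt (le_of_lt hn0)
      calc D * (σ * Real.sqrt n) ≤ (Real.sqrt n * Δ) * (σ * Real.sqrt n) :=
            mul_le_mul_of_nonneg_right hpert (by positivity)
        _ = Δ * ((Real.sqrt n * Real.sqrt n) * σ) := by ring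
        _ = Δ * (↑n * σ) := by rw [hss]
    linarith
  calc ∑ i, |Real.log (lam' i) - Real.log (lam i)|
      ≤ ∑ i, Real.log (1 + d i / σ) := step1
    _ ≤ n * Real.log (1 + D / (n * σ)) := step2
    _ ≤ n * Real.log (1 + Δ / (σ * Real.sqrt n)) :=
        mul_le_mul_of_nonneg_left step3 (le_of_lt hn0)
end

section
/- Suppose a randomized mechanism M outputs a subset S of {1,…,n} by including each index i independently with probability e^{uᵢ(D)}/(e^{uᵢ(D)}+1), where for all neighboring datasets D, D' we have Σᵢ |uᵢ(D) − uᵢ(D')| ≤ Δ. Then for any subset S, P[M(D) = S] ≤ e^{2Δ} · P[M(D') = S]; i.e., M is 2Δ-differentially pure DP. -/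
/-!
With `σ(x) = 1 / (1 + e^{-x})`, the bound `σ(a) ≤ e^{|a - b|} σ(b)` reads
`1 + e^{-b} ≤ e^{|a - b|} (1 + e^{-a})`, which holds termwise. As `1 - σ(x) = σ(-x)`, every factor
of the output probability therefore grows by at most `e^{|uᵢ - uᵢ'|}` when `u'` is replaced by `u`,
and the product by at most `e^{Δ} ≤ e^{2Δ}`.
-/

open Real Finset

namespace Real

lemma exp_div_one_add_exp (x : ℝ) : exp x / (1 + exp x) = sigmoid x := by
  rw [sigmoid_def, exp_neg]
  field_simp
  ring

lemma sigmoid_le_exp_abs_sub_mul (a b : ℝ) : sigmoid a ≤ exp |a - b| * sigmoid b := by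
  have h_one : 1 ≤ exp |a - b| := one_le_exp (abs_nonneg _)
  have h_exp : exp (-b) ≤ exp |a - b| * exp (-a) := by
    rw [← exp_add, exp_le_exp]
    linarith [le_abs_self (a - b)]
  rw [sigmoid_def, sigmoid_def, ← one_div, ← div_eq_mul_inv,
    div_le_div_iff₀ (by positivity) (by positivity)]
  linarith [mul_add (exp |a - b|) 1 (exp (-a))]

end Real

lemma ite_sigmoid_nonneg (p : Prop) [Decidable p] (a : ℝ) :
    0 ≤ if p then sigmoid a else sigmoid (-a) := by
  split_ifs <;> exact sigmoid_nonneg _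

lemma ite_sigmoid_le_exp_abs_sub_mul (p : Prop) [Decidable p] (a b : ℝ) :
    (if p then sigmoid a else sigmoid (-a)) ≤
      exp |a - b| * if p then sigmoid b else sigmoid (-b) := by
  split_ifs
  · exact sigmoid_le_exp_abs_sub_mul a b
  · have := sigmoid_le_exp_abs_sub_mul (-a) (-b)
    rwa [neg_sub_neg, abs_sub_comm] at this

lemma Finset.prod_le_exp_sum_mul_prod {ι : Type*} (s : Finset ι) {f g d : ι → ℝ}
    (hf : ∀ i ∈ s, 0 ≤ f i) (hfg : ∀ i ∈ s, f i ≤ exp (d i) * g i) :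
    ∏ i ∈ s, f i ≤ exp (∑ i ∈ s, d i) * ∏ i ∈ s, g i := by
  rw [exp_sum, ← prod_mul_distrib]
  exact prod_le_prod hf hfg

/-- A mechanism that includes each index `i` independently with probability
`sigmoid (uᵢ(D)) = e^{uᵢ}/(1+e^{uᵢ})` is `2Δ`-differentially private whenever the
scores of neighboring datasets satisfy `∑ᵢ |uᵢ(D) − uᵢ(D')| ≤ Δ`. -/
theorem sigmoid_mechanism_dp {n : ℕ} (Δ : ℝ) (u u' : Fin n → ℝ)
    (h : ∑ i, |u i - u' i| ≤ Δ) (S : Finset (Fin n)) :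
    (∏ i, if i ∈ S then exp (u i) / (1 + exp (u i))
          else 1 - exp (u i) / (1 + exp (u i)))
      ≤ exp (2 * Δ) *
        ∏ i, if i ∈ S then exp (u' i) / (1 + exp (u' i))
             else 1 - exp (u' i) / (1 + exp (u' i)) := by
  simp only [exp_div_one_add_exp, ← sigmoid_neg]
  have hΔ : 0 ≤ Δ := (sum_nonneg fun i _ ↦ abs_nonneg _).trans h
  calc _ ≤ exp (∑ i, |u i - u' i|) * ∏ i, if i ∈ S then sigmoid (u' i) else sigmoid (-u' i) :=
        prod_le_exp_sum_mul_prod _ (fun i _ ↦ ite_sigmoid_nonneg _ _)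
          fun i _ ↦ ite_sigmoid_le_exp_abs_sub_mul _ _ _
    _ ≤ exp (2 * Δ) * ∏ i, if i ∈ S then sigmoid (u' i) else sigmoid (-u' i) := by
        gcongr
        · exact prod_nonneg fun i _ ↦ ite_sigmoid_nonneg _ _
        · linarith
end
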